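/- arXiv:1402.0302 — 2 statements merged into one kernel-verified Lean document; each statement's English description precedes it below -/
import Mathlib

section
/- Let d ≥ 3, p > 0, and 0 ≤ α < (d−2)/(d−1); set a = 2(d−2)·γ(d,p,α) and b = d−2−α(d−1). Let φ : (0,∞) → ℝ be differentiable with φ ≥ 0, and let v > 0 satisfy 0 < φ(v) < a and suppose the derivative at v of the function g_φ(w) = w^b·φ(w)/(a − φ(w)) is nonnegative. Then Ψ_φ(v) ≤ 0. -/
open Finset

/-- `γ(d,p,α)` from the paper. -/
noncomputable def gam (d : ℕ) (p α : ℝ) : ℝ :=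
  min 1 ((d : ℝ) ^ ((2 - p - α) / p)) * (1 - α * ((d : ℝ) - 1) / ((d : ℝ) - 2))

/-- `Ψ_φ(v)` from the paper. -/
noncomputable def PsiPhi (d : ℕ) (p α : ℝ) (φ : ℝ → ℝ) (v : ℝ) : ℝ :=
  max 1 ((d : ℝ) ^ ((p + α - 2) / p)) * φ v
    - 2 * ((d : ℝ) - 2 - α * ((d : ℝ) - 1)) - 2 * v * deriv φ v / φ v

/-!
Write `M = max 1 (d ^ ((p + α - 2) / p))` and `b = d - 2 - α (d - 1)`. Since
`min 1 x⁻¹ = (max 1 x)⁻¹`, the constant `a` is exactly `2 b / M`. The quotient rule gives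
`g_φ'(v) = v ^ (b - 1) (b φ (a - φ) + a v φ') / (a - φ) ^ 2`, so `g_φ'(v) ≥ 0` means
`b φ (a - φ) + a v φ' ≥ 0`; and `a φ Ψ_φ(v) = -2 (b φ (a - φ) + a v φ')` once `a M = 2 b`.
-/

lemma min_one_inv_eq_inv_max_one {x : ℝ} (hx : 0 < x) : min 1 x⁻¹ = (max 1 x)⁻¹ := by
  rcases le_total 1 x with h | h
  · rw [max_eq_right h, min_eq_right (inv_le_one_of_one_le₀ h)]
  · rw [max_eq_left h, min_eq_left (one_le_inv_iff₀.mpr ⟨hx, h⟩), inv_one]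

lemma gam_mul_max {d : ℕ} (hd : 3 ≤ d) (p α : ℝ) :
    2 * ((d : ℝ) - 2) * gam d p α * max 1 ((d : ℝ) ^ ((p + α - 2) / p))
      = 2 * ((d : ℝ) - 2 - α * ((d : ℝ) - 1)) := by
  have hd3 : (3 : ℝ) ≤ d := by exact_mod_cast hd
  have hd0 : (0 : ℝ) < d := by linarith
  have hx : (0 : ℝ) < (d : ℝ) ^ ((p + α - 2) / p) := Real.rpow_pos_of_pos hd0 _
  have hneg : (2 - p - α) / p = -((p + α - 2) / p) := by ring
  rw [gam, hneg, Real.rpow_neg hd0.le, min_one_inv_eq_inv_max_one hx]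
  have : (d : ℝ) - 2 ≠ 0 := by linarith
  field_simp

lemma deriv_rpow_mul_div_const_sub {φ : ℝ → ℝ} {a b v : ℝ} (hv : 0 < v)
    (hφ : DifferentiableAt ℝ φ v) (ha : φ v ≠ a) :
    deriv (fun w => w ^ b * φ w / (a - φ w)) v
      = v ^ (b - 1) * (b * φ v * (a - φ v) + a * v * deriv φ v) / (a - φ v) ^ 2 := by
  have hpow : HasDerivAt (fun w : ℝ => w ^ b) (b * v ^ (b - 1)) v :=
    Real.hasDerivAt_rpow_const (Or.inl hv.ne')
  have hquot : HasDerivAt (fun w => w ^ b * φ w / (a - φ w))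
      (((b * v ^ (b - 1) * φ v + v ^ b * deriv φ v) * (a - φ v)
        - v ^ b * φ v * (0 - deriv φ v)) / (a - φ v) ^ 2) v :=
    (hpow.mul hφ.hasDerivAt).div ((hasDerivAt_const v a).sub hφ.hasDerivAt)
      (sub_ne_zero.mpr ha.symm)
  have hvb : v ^ b = v ^ (b - 1) * v := by
    rw [← Real.rpow_add_one hv.ne']; ring_nf
  rw [hquot.deriv, hvb]
  ring

lemma mul_sub_sub_div_nonpos {M a b x y v : ℝ} (haM : a * M = 2 * b) (ha : 0 < a) (hx : 0 < x)
    (h : 0 ≤ b * x * (a - x) + a * v * y) :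
    M * x - 2 * b - 2 * v * y / x ≤ 0 := by
  have key : a * x * (M * x - 2 * b - 2 * v * y / x) = -2 * (b * x * (a - x) + a * v * y) := by
    field_simp
    linear_combination x ^ 2 * haM
  refine nonpos_of_mul_nonpos_right ?_ (mul_pos ha hx)
  rw [key]
  linarith

theorem stmt_6_general {d : ℕ} (hd : 3 ≤ d) (p α : ℝ)
    (a b : ℝ) (ha : a = 2 * ((d : ℝ) - 2) * gam d p α)
    (hb : b = (d : ℝ) - 2 - α * ((d : ℝ) - 1))
    (φ : ℝ → ℝ) (hdiff : ∀ v, 0 < v → DifferentiableAt ℝ φ v)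
    (v : ℝ) (hv : 0 < v) (h1 : 0 < φ v) (h2 : φ v < a)
    (hg : 0 ≤ deriv (fun w => w ^ b * φ w / (a - φ w)) v) :
    PsiPhi d p α φ v ≤ 0 := by
  have haM : a * max 1 ((d : ℝ) ^ ((p + α - 2) / p)) = 2 * b := by
    rw [ha, hb, gam_mul_max hd]
  have hsq : 0 < (a - φ v) ^ 2 := pow_pos (sub_pos.mpr h2) 2
  rw [deriv_rpow_mul_div_const_sub hv (hdiff v hv) h2.ne, le_div_iff₀ hsq, zero_mul] at hg
  have hK := nonneg_of_mul_nonneg_right hg (Real.rpow_pos_of_pos hv _)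
  rw [PsiPhi, ← hb]
  exact mul_sub_sub_div_nonpos haM (h1.trans h2) h1 hK

theorem stmt_6 {d : ℕ} (hd : 3 ≤ d) (p α : ℝ) (hp : 0 < p)
    (hα0 : 0 ≤ α) (hα1 : α < ((d : ℝ) - 2) / ((d : ℝ) - 1))
    (a b : ℝ) (ha : a = 2 * ((d : ℝ) - 2) * gam d p α)
    (hb : b = (d : ℝ) - 2 - α * ((d : ℝ) - 1))
    (φ : ℝ → ℝ) (hdiff : ∀ v, 0 < v → DifferentiableAt ℝ φ v)
    (hφ : ∀ v, 0 < v → 0 ≤ φ v)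
    (v : ℝ) (hv : 0 < v) (h1 : 0 < φ v) (h2 : φ v < a)
    (hg : 0 ≤ deriv (fun w => w ^ b * φ w / (a - φ w)) v) :
    PsiPhi d p α φ v ≤ 0 :=
  stmt_6_general hd p α a b ha hb φ hdiff v hv h1 h2 hg
end

section
/- Let d ≥ 3, n ≥ 1, p > 0, 0 ≤ α < (d−2)/(d−1), and λ > 0; set a = 2(d−2)·γ(d,p,α), b = d−2−α(d−1), and l = b/(1 + 2b/(n+2)). Define φ̃_DS(u) = a/(1 + λ·u^l) for u > 0. Then the function g(u) = u^b·φ̃_DS(u)/(a − φ̃_DS(u))^{1+2b/(n+2)} is monotone nondecreasing on (0,∞). -/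
open Finset

/-!
Writing `s = λ u^l` and `c = 1 + 2b/(n+2)`, one has `a - φ̃_DS(u) = a s / (1 + s)` and
`u^b = u^{l c}`, so `g(u) = a^{1-c} λ^{-c} (1 + λ u^l)^{c-1}`, which is nondecreasing because
`c > 1` and `l > 0`.
-/

theorem gam_pos {d : ℕ} (hd : 3 ≤ d) (p : ℝ) {α : ℝ} (hα : α < ((d : ℝ) - 2) / ((d : ℝ) - 1)) :
    0 < gam d p α := by
  have hd3 : (3 : ℝ) ≤ d := by exact_mod_cast hd
  have hd2 : (0 : ℝ) < d - 2 := by linarith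
  have hα' : α * ((d : ℝ) - 1) < d - 2 := (lt_div_iff₀ (by linarith)).mp hα
  have hmin : 0 < min 1 ((d : ℝ) ^ ((2 - p - α) / p)) :=
    lt_min one_pos (Real.rpow_pos_of_pos (by linarith) _)
  have hfactor : α * ((d : ℝ) - 1) / (d - 2) < 1 := (div_lt_one hd2).mpr hα'
  exact mul_pos hmin (by linarith)

noncomputable def phiDS (a lam l u : ℝ) : ℝ := a / (1 + lam * u ^ l)

theorem sub_phiDS {a lam l u : ℝ} (h : 1 + lam * u ^ l ≠ 0) :
    a - phiDS a lam l u = a * lam * u ^ l / (1 + lam * u ^ l) := by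
  unfold phiDS
  field_simp
  ring

theorem rpow_mul_phiDS_div_sub_phiDS_rpow {a lam l u : ℝ} (c : ℝ) (ha : 0 < a) (hlam : 0 < lam)
    (hu : 0 < u) :
    u ^ (l * c) * phiDS a lam l u / (a - phiDS a lam l u) ^ c =
      a ^ (1 - c) * lam ^ (-c) * (1 + lam * u ^ l) ^ (c - 1) := by
  have ht : 0 < u ^ l := Real.rpow_pos_of_pos hu l
  have hs : 0 < 1 + lam * u ^ l := by positivity
  have hpow : (a * lam * u ^ l / (1 + lam * u ^ l)) ^ c =
      a ^ c * lam ^ c * u ^ (l * c) / (1 + lam * u ^ l) ^ c := by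
    rw [Real.div_rpow (by positivity) hs.le, Real.mul_rpow (by positivity) ht.le,
      Real.mul_rpow ha.le hlam.le, ← Real.rpow_mul hu.le]
  rw [sub_phiDS hs.ne', hpow, Real.rpow_sub ha, Real.rpow_neg hlam.le, Real.rpow_sub hs,
    Real.rpow_one, Real.rpow_one, phiDS]
  have hu' : 0 < u ^ (l * c) := Real.rpow_pos_of_pos hu _
  have ha' : 0 < a ^ c := Real.rpow_pos_of_pos ha c
  have hlam' : 0 < lam ^ c := Real.rpow_pos_of_pos hlam c
  have hs' : 0 < (1 + lam * u ^ l) ^ c := Real.rpow_pos_of_pos hs c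
  field_simp

theorem monotoneOn_rpow_mul_phiDS_div_sub_phiDS_rpow {a lam l b c : ℝ} (ha : 0 < a)
    (hlam : 0 < lam) (hl : 0 ≤ l) (hc : 1 ≤ c) (hb : l * c = b) :
    MonotoneOn (fun u => u ^ b * phiDS a lam l u / (a - phiDS a lam l u) ^ c)
      (Set.Ioi 0) := by
  subst hb
  intro x hx y hy hxy
  simp only [rpow_mul_phiDS_div_sub_phiDS_rpow c ha hlam hx,
    rpow_mul_phiDS_div_sub_phiDS_rpow c ha hlam hy]
  have hxl : x ^ l ≤ y ^ l := Real.rpow_le_rpow (le_of_lt hx) hxy hl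
  have hx' : 0 < 1 + lam * x ^ l := by
    have := Real.rpow_pos_of_pos (show (0 : ℝ) < x from hx) l
    positivity
  gcongr

theorem stmt_18_general {d n : ℕ} (hd : 3 ≤ d) (p α lam : ℝ)
    (hα1 : α < ((d : ℝ) - 2) / ((d : ℝ) - 1)) (hlam : 0 < lam)
    (a b l : ℝ) (ha : a = 2 * ((d : ℝ) - 2) * gam d p α)
    (hb : b = (d : ℝ) - 2 - α * ((d : ℝ) - 1))
    (hl : l = b / (1 + 2 * b / ((n : ℝ) + 2))) :
    MonotoneOn
      (fun u => u ^ b * (a / (1 + lam * u ^ l)) /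
        (a - a / (1 + lam * u ^ l)) ^ (1 + 2 * b / ((n : ℝ) + 2)))
      (Set.Ioi (0 : ℝ)) := by
  have hd3 : (3 : ℝ) ≤ d := by exact_mod_cast hd
  have hb0 : 0 < b := by
    rw [hb]
    linarith [(lt_div_iff₀ (by linarith : (0 : ℝ) < d - 1)).mp hα1]
  have ha0 : 0 < a := by
    rw [ha]
    have := gam_pos hd p hα1
    have : (0 : ℝ) < d - 2 := by linarith
    positivity
  have hc : 1 ≤ 1 + 2 * b / ((n : ℝ) + 2) := by
    have : 0 ≤ 2 * b / ((n : ℝ) + 2) := by positivity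
    linarith
  have hl0 : 0 ≤ l := by rw [hl]; exact div_nonneg hb0.le (by linarith)
  have hlc : l * (1 + 2 * b / ((n : ℝ) + 2)) = b := by
    rw [hl]; exact div_mul_cancel₀ b (by linarith)
  exact monotoneOn_rpow_mul_phiDS_div_sub_phiDS_rpow ha0 hlam hl0 hc hlc

theorem stmt_18 {d n : ℕ} (hd : 3 ≤ d) (hn : 1 ≤ n) (p α lam : ℝ) (hp : 0 < p)
    (hα0 : 0 ≤ α) (hα1 : α < ((d : ℝ) - 2) / ((d : ℝ) - 1)) (hlam : 0 < lam)
    (a b l : ℝ) (ha : a = 2 * ((d : ℝ) - 2) * gam d p α)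
    (hb : b = (d : ℝ) - 2 - α * ((d : ℝ) - 1))
    (hl : l = b / (1 + 2 * b / ((n : ℝ) + 2))) :
    MonotoneOn
      (fun u => u ^ b * (a / (1 + lam * u ^ l)) /
        (a - a / (1 + lam * u ^ l)) ^ (1 + 2 * b / ((n : ℝ) + 2)))
      (Set.Ioi (0 : ℝ)) :=
  stmt_18_general hd p α lam hα1 hlam a b l ha hb hl
end
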